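/- The KL divergence between the best-of-n policy and the base policy is at most log n − (n−1)/n: if π is a probability distribution on a finite set and π^{(n)} denotes the distribution of the highest-reward sample among n i.i.d. draws from π (with respect to an injective reward function, so ties have probability zero at each fixed point via strict ordering), then D_KL(π^{(n)} ‖ π) ≤ log n − (n−1)/n. -/

import Mathlib

/-!
Write `F a` and `G a` for the `π`-mass of `{a' | r a' ≤ r a}` and `{a' | r a' < r a}`, so that
`π a = F a - G a` and `π⁽ⁿ⁾ a = F a ^ n - G a ^ n`. The ratio `π⁽ⁿ⁾ a / π a` is then the mean over
`[G a, F a]` of `n x ^ (n - 1)`, the density of the maximum of `n` uniform samples, so by Jensen for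
`φ t = t log t` the `a`-th term of the divergence is at most `∫_{G a}^{F a} φ (n x ^ (n - 1)) dx`.
Since `r` is injective these intervals tile `[0, 1]`, and
`∫₀¹ n x ^ (n - 1) log (n x ^ (n - 1)) dx = log n - (n - 1) / n`.
-/

open Finset

section Cumulative

variable {A β M : Type*} [LinearOrder β] {r : A → β}

theorem sum_filter_le_eq_add_sum_filter_lt [AddCommMonoid M] (hr : Function.Injective r)
    (p : A → M) {s : Finset A} {a : A} (ha : a ∈ s) :
    ∑ a' ∈ s.filter (fun a' => r a' ≤ r a), p a' =
      p a + ∑ a' ∈ s.filter (fun a' => r a' < r a), p a' := by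
  classical
  have hsplit : s.filter (fun a' => r a' ≤ r a) = insert a (s.filter (fun a' => r a' < r a)) := by
    ext x
    simp only [mem_filter, mem_insert, le_iff_lt_or_eq, hr.eq_iff]
    constructor
    · rintro ⟨hx, hlt | rfl⟩
      exacts [Or.inr ⟨hx, hlt⟩, Or.inl rfl]
    · rintro (rfl | ⟨hx, hlt⟩)
      exacts [⟨ha, Or.inr rfl⟩, ⟨hx, Or.inl hlt⟩]
  rw [hsplit, sum_insert (by simp)]

theorem sum_sub_cumulative_telescope {N : Type*} [AddCommMonoid M] [AddCommGroup N]
    (hr : Function.Injective r) (p : A → M) (H : M → N) (s : Finset A) :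
    ∑ a ∈ s, (H (∑ a' ∈ s.filter (fun a' => r a' ≤ r a), p a') -
        H (∑ a' ∈ s.filter (fun a' => r a' < r a), p a')) =
      H (∑ a ∈ s, p a) - H 0 := by
  classical
  induction s using Finset.induction_on_max_value r with
  | empty => simp
  | insert a s ha hmax ih =>
    have hlt : ∀ x ∈ s, r x < r a := fun x hx =>
      (hmax x hx).lt_of_ne fun h => ha (hr h ▸ hx)
    have hle_a : (insert a s).filter (fun a' => r a' ≤ r a) = insert a s :=
      filter_true_of_mem fun x hx => by
        rcases mem_insert.1 hx with rfl | hx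
        exacts [le_rfl, (hlt x hx).le]
    have hlt_a : (insert a s).filter (fun a' => r a' < r a) = s := by
      rw [filter_insert, if_neg (lt_irrefl _), filter_true_of_mem hlt]
    have hrest : ∀ x ∈ s,
        H (∑ a' ∈ (insert a s).filter (fun a' => r a' ≤ r x), p a') -
          H (∑ a' ∈ (insert a s).filter (fun a' => r a' < r x), p a') =
        H (∑ a' ∈ s.filter (fun a' => r a' ≤ r x), p a') -
          H (∑ a' ∈ s.filter (fun a' => r a' < r x), p a') := fun x hx => by
      rw [filter_insert, if_neg (not_le.2 (hlt x hx)), filter_insert,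
        if_neg (not_lt.2 (hlt x hx).le)]
    rw [sum_insert ha, hle_a, hlt_a, sum_congr rfl hrest, ih, sum_insert ha]
    abel

end Cumulative

section Analysis

open Real

theorem Real.mul_log_add_mul_sub_le {ρ y : ℝ} (hρ : 0 < ρ) (hy : 0 ≤ y) :
    ρ * log ρ + (log ρ + 1) * (y - ρ) ≤ y * log y := by
  rcases hy.eq_or_lt with rfl | hy
  · simp only [zero_mul]
    linarith
  have h := mul_nonneg hρ.le (InformationTheory.klFun_nonneg (div_nonneg hy.le hρ.le))
  rw [InformationTheory.klFun, log_div hy.ne' hρ.ne'] at h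
  field_simp at h
  nlinarith

/-- Jensen's inequality on `[a, b]` for the mean `ρ` of `f`, with the integrals of `f` and `φ ∘ f`
given through antiderivatives `F` and `Φ`. -/
theorem mul_le_sub_of_hasDerivAt_of_tangent_le {f F Φ φ : ℝ → ℝ} {a b ρ s : ℝ} (hab : a ≤ b)
    (hF : ContinuousOn F (Set.Icc a b)) (hΦ : ContinuousOn Φ (Set.Icc a b))
    (hF' : ∀ x ∈ Set.Ioo a b, HasDerivAt F (f x) x)
    (hΦ' : ∀ x ∈ Set.Ioo a b, HasDerivAt Φ (φ (f x)) x)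
    (htangent : ∀ x ∈ Set.Ioo a b, φ ρ + s * (f x - ρ) ≤ φ (f x))
    (hρ : ρ * (b - a) = F b - F a) :
    (b - a) * φ ρ ≤ Φ b - Φ a := by
  let k : ℝ → ℝ := fun x => Φ x - φ ρ * x - s * (F x - ρ * x)
  have hmono : MonotoneOn k (Set.Icc a b) := by
    refine monotoneOn_of_hasDerivWithinAt_nonneg (convex_Icc a b)
      (f' := fun x => φ (f x) - φ ρ * 1 - s * (f x - ρ * 1)) ?_ ?_ ?_
    · exact (hΦ.sub (continuousOn_const.mul continuousOn_id)).sub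
        (continuousOn_const.mul (hF.sub (continuousOn_const.mul continuousOn_id)))
    · intro x hx
      rw [interior_Icc] at hx
      exact (((hΦ' x hx).sub ((hasDerivAt_id x).const_mul _)).sub
        (((hF' x hx).sub ((hasDerivAt_id x).const_mul ρ)).const_mul s)).hasDerivWithinAt
    · intro x hx
      rw [interior_Icc] at hx
      linarith [htangent x hx]
  have hk := hmono (Set.left_mem_Icc.2 hab) (Set.right_mem_Icc.2 hab) hab
  simp only [k] at hk
  linear_combination hk + s * hρ

/-- An antiderivative of `x ↦ φ (n x ^ (n - 1))` for `φ t = t log t`. -/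
noncomputable def bestOfNPrimitive (n : ℕ) (x : ℝ) : ℝ :=
  x ^ n * (log n - (n - 1) / n) + (n - 1) * (x ^ n * log x)

variable {n : ℕ}

theorem continuous_bestOfNPrimitive (hn : n ≠ 0) : Continuous (bestOfNPrimitive n) := by
  have hpow_log : Continuous fun x : ℝ => x ^ n * log x := by
    refine ((continuous_pow (n - 1)).mul continuous_mul_log).congr fun x => ?_
    show x ^ (n - 1) * (x * log x) = x ^ n * log x
    rw [← mul_assoc, ← pow_succ, Nat.sub_add_cancel (Nat.one_le_iff_ne_zero.2 hn)]
  unfold bestOfNPrimitive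
  fun_prop

theorem hasDerivAt_bestOfNPrimitive (hn : n ≠ 0) {x : ℝ} (hx : 0 < x) :
    HasDerivAt (bestOfNPrimitive n) (n * x ^ (n - 1) * log (n * x ^ (n - 1))) x := by
  unfold bestOfNPrimitive
  refine (((hasDerivAt_pow n x).mul_const _).add
    (((hasDerivAt_pow n x).mul (hasDerivAt_log hx.ne')).const_mul _)).congr_deriv ?_
  have hpow : x ^ n = x ^ (n - 1) * x := by
    rw [← pow_succ, Nat.sub_add_cancel (Nat.one_le_iff_ne_zero.2 hn)]
  have hn' : (n : ℝ) ≠ 0 := Nat.cast_ne_zero.2 hn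
  rw [log_mul hn' (by positivity), log_pow, Nat.cast_sub (Nat.one_le_iff_ne_zero.2 hn), hpow]
  field_simp
  ring

theorem bestOfNPrimitive_zero (hn : n ≠ 0) : bestOfNPrimitive n 0 = 0 := by
  simp [bestOfNPrimitive, hn]

theorem bestOfNPrimitive_one : bestOfNPrimitive n 1 = log n - (n - 1) / n := by
  simp [bestOfNPrimitive]

theorem sub_pow_mul_log_div_sub_le (hn : n ≠ 0) {G F : ℝ} (hG : 0 ≤ G) (hGF : G ≤ F) :
    (F ^ n - G ^ n) * log ((F ^ n - G ^ n) / (F - G)) ≤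
      bestOfNPrimitive n F - bestOfNPrimitive n G := by
  rcases hGF.eq_or_lt with rfl | hGF
  · simp
  set ρ := (F ^ n - G ^ n) / (F - G)
  have hρ : ρ * (F - G) = F ^ n - G ^ n := div_mul_cancel₀ _ (sub_ne_zero.2 hGF.ne')
  have hρ_pos : 0 < ρ := div_pos (sub_pos.2 (pow_lt_pow_left₀ hGF hG hn)) (sub_pos.2 hGF)
  have hjensen := mul_le_sub_of_hasDerivAt_of_tangent_le (φ := fun t => t * log t)
    (f := fun x => n * x ^ (n - 1)) (s := log ρ + 1) hGF.le
    (continuous_pow n).continuousOn (continuous_bestOfNPrimitive hn).continuousOn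
    (fun x _ => by simpa using hasDerivAt_pow n x)
    (fun x hx => hasDerivAt_bestOfNPrimitive hn (hG.trans_lt hx.1))
    (fun x hx => mul_log_add_mul_sub_le hρ_pos (by have := hG.trans_lt hx.1; positivity)) hρ
  rw [← hρ]
  linarith

end Analysis

theorem best_of_n_kl_bound_general {A : Type*} [Fintype A]
    (π : A → ℝ) (hπ : ∀ a, 0 ≤ π a) (hsum : ∑ a, π a = 1)
    (r : A → ℝ) (hr : Function.Injective r) (n : ℕ) (hn : 1 ≤ n)
    (πn : A → ℝ)
    (hπn : ∀ a, πn a =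
      (∑ a' ∈ Finset.univ.filter (fun a' => r a' ≤ r a), π a') ^ n -
      (∑ a' ∈ Finset.univ.filter (fun a' => r a' < r a), π a') ^ n) :
    ∑ a, πn a * Real.log (πn a / π a) ≤ Real.log n - (n - 1) / n := by
  have hn0 : n ≠ 0 := Nat.one_le_iff_ne_zero.1 hn
  set F : A → ℝ := fun a => ∑ a' ∈ univ.filter (fun a' => r a' ≤ r a), π a'
  set G : A → ℝ := fun a => ∑ a' ∈ univ.filter (fun a' => r a' < r a), π a'
  have hπF : ∀ a, π a = F a - G a := fun a => by
    simp only [F, G]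
    rw [sum_filter_le_eq_add_sum_filter_lt hr π (mem_univ a), add_sub_cancel_right]
  have hG : ∀ a, 0 ≤ G a := fun a => sum_nonneg fun a' _ => hπ a'
  calc ∑ a, πn a * Real.log (πn a / π a)
      ≤ ∑ a, (bestOfNPrimitive n (F a) - bestOfNPrimitive n (G a)) :=
        sum_le_sum fun a _ => by
          rw [hπn a, hπF a]
          exact sub_pow_mul_log_div_sub_le hn0 (hG a) (by linarith [hπ a, hπF a])
    _ = bestOfNPrimitive n 1 - bestOfNPrimitive n 0 := by
        rw [sum_sub_cumulative_telescope hr π (bestOfNPrimitive n), hsum]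
    _ = Real.log n - (n - 1) / n := by
        rw [bestOfNPrimitive_one, bestOfNPrimitive_zero hn0, sub_zero]

theorem best_of_n_kl_bound {A : Type*} [Fintype A] [Nonempty A]
    (π : A → ℝ) (hπ : ∀ a, 0 ≤ π a) (hsum : ∑ a, π a = 1)
    (r : A → ℝ) (hr : Function.Injective r) (n : ℕ) (hn : 1 ≤ n)
    (πn : A → ℝ)
    (hπn : ∀ a, πn a =
      (∑ a' ∈ Finset.univ.filter (fun a' => r a' ≤ r a), π a') ^ n -
      (∑ a' ∈ Finset.univ.filter (fun a' => r a' < r a), π a') ^ n) :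
    ∑ a, πn a * Real.log (πn a / π a) ≤ Real.log n - (n - 1) / n :=
  best_of_n_kl_bound_general π hπ hsum r hr n hn πn hπn
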